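/- There exists a constant C > 0 such that for every c ∈ [−1, 1) and all ξ, ξ' ∈ ℝ, |∫₀^∞ (t^{iξ + 3/2} − t^{iξ' + 3/2}) (t² − 2ct + 1)^{−3/2} dt/t| ≤ C |ξ − ξ'| (1 − c)^{−1/2}. -/

import Mathlib

open MeasureTheory Real Set Filter Topology

/-!
Factor `t^{iξ+3/2} - t^{iξ'+3/2} = t^{3/2} (t^{iξ} - t^{iξ'})` and use
`|t^{iξ} - t^{iξ'}| ≤ |ξ - ξ'| |log t|` together with `√t |log t| ≤ 2 |t - 1|`.
For `c ∈ [-1, 1]` and `ε = 1 - c` one has `(t - 1)² + ε ≤ 4 (t² - 2ct + 1)`, so the integrand is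
bounded by `16 |ξ - ξ'| |t - 1| ((t - 1)² + ε)^{-3/2}`. On either side of `t = 1` this is the
derivative of `∓((t - 1)² + ε)^{-1/2}`, so its integral over `(0, ∞)` is at most `2 ε^{-1/2}`.
-/

theorem Real.sqrt_mul_abs_log_le {t : ℝ} (ht : 0 < t) : √t * |log t| ≤ 2 * |t - 1| := by
  set s := √t
  have hs : 0 < s := sqrt_pos.mpr ht
  have hst : t = s ^ 2 := (sq_sqrt ht.le).symm
  have hlog : log t = 2 * log s := by rw [log_sqrt ht.le]; ring
  have hup : s * log s ≤ s * (s - 1) := mul_le_mul_of_nonneg_left (log_le_sub_one_of_pos hs) hs.le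
  have hlow : s * (1 - s⁻¹) ≤ s * log s :=
    mul_le_mul_of_nonneg_left (one_sub_inv_le_log_of_pos hs) hs.le
  rw [mul_sub, mul_inv_cancel₀ hs.ne', mul_one] at hlow
  rw [hlog, hst, abs_mul, abs_two]
  rcases le_total 1 s with h | h
  · rw [abs_of_nonneg (log_nonneg h), abs_of_nonneg (by nlinarith)]
    nlinarith
  · rw [abs_of_nonpos (log_nonpos hs.le h), abs_of_nonpos (by nlinarith)]
    nlinarith

theorem norm_ofReal_cpow_sub_cpow_le {t : ℝ} (ht : 0 < t) (ξ ξ' : ℝ) (s : ℂ) :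
    ‖(t : ℂ) ^ ((ξ : ℂ) * Complex.I + s) - (t : ℂ) ^ ((ξ' : ℂ) * Complex.I + s)‖
      ≤ |ξ - ξ'| * |log t| * t ^ s.re := by
  have ht0 : (t : ℂ) ≠ 0 := by exact_mod_cast ht.ne'
  have hfactor : (t : ℂ) ^ ((ξ : ℂ) * Complex.I + s)
      = Complex.exp (Complex.I * ((ξ - ξ') * log t : ℝ)) *
          (t : ℂ) ^ ((ξ' : ℂ) * Complex.I + s) := by
    rw [Complex.cpow_def_of_ne_zero ht0, Complex.cpow_def_of_ne_zero ht0, ← Complex.exp_add,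
      ← Complex.ofReal_log ht.le]
    push_cast
    ring_nf
  rw [hfactor, ← sub_one_mul, norm_mul, Complex.norm_cpow_eq_rpow_re_of_pos ht]
  simp only [Complex.add_re, Complex.mul_re, Complex.ofReal_re, Complex.I_re, Complex.ofReal_im,
    Complex.I_im, mul_zero, zero_mul, sub_zero, zero_add]
  gcongr
  simpa [abs_mul] using Real.norm_exp_I_mul_ofReal_sub_one_le (x := (ξ - ξ') * log t)

theorem sq_sub_one_add_le_four_mul {t c : ℝ} (ht : 0 ≤ t) (hc : c ∈ Icc (-1 : ℝ) 1) :
    (t - 1) ^ 2 + (1 - c) ≤ 4 * (t ^ 2 - 2 * c * t + 1) := by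
  obtain ⟨hc₁, hc₂⟩ := hc
  nlinarith [mul_nonneg ht (by linarith : 0 ≤ 1 + c), mul_nonneg ht (by linarith : 0 ≤ 1 - c)]

theorem rpow_neg_three_halves_le_of_le_four_mul {x y : ℝ} (hx : 0 < x) (hxy : x ≤ 4 * y) :
    y ^ (-(3 : ℝ) / 2) ≤ 8 * x ^ (-(3 : ℝ) / 2) := by
  have h4 : (4 : ℝ) ^ (-(3 : ℝ) / 2) = 8⁻¹ := by
    rw [show (4 : ℝ) = 2 ^ (2 : ℝ) by norm_num, ← rpow_mul (by norm_num)]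
    norm_num
  calc y ^ (-(3 : ℝ) / 2) ≤ (x / 4) ^ (-(3 : ℝ) / 2) :=
        rpow_le_rpow_of_nonpos (by positivity) (by linarith) (by norm_num)
    _ = 8 * x ^ (-(3 : ℝ) / 2) := by
        rw [div_rpow hx.le (by norm_num), h4]
        ring

theorem Real.rpow_three_halves {t : ℝ} (ht : 0 ≤ t) : t ^ ((3 : ℝ) / 2) = t * √t := by
  rw [sqrt_eq_rpow, show (3 : ℝ) / 2 = 1 + 1 / 2 by norm_num, rpow_add' ht (by norm_num), rpow_one]

section
variable {ε : ℝ} (p : ℝ)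

theorem hasDerivAt_neg_sq_sub_add_rpow_neg_half (hε : 0 < ε) (x : ℝ) :
    HasDerivAt (fun t ↦ -((t - p) ^ 2 + ε) ^ (-(1 : ℝ) / 2))
      ((x - p) * ((x - p) ^ 2 + ε) ^ (-(3 : ℝ) / 2)) x := by
  have hbase : HasDerivAt (fun t ↦ (t - p) ^ 2 + ε) (2 * (x - p)) x := by
    simpa using (((hasDerivAt_id x).sub_const p).pow 2).add_const ε
  refine (hbase.rpow_const (p := -(1 : ℝ) / 2) (Or.inl (by positivity))).neg.congr_deriv ?_
  rw [show -(1 : ℝ) / 2 - 1 = -(3 : ℝ) / 2 by norm_num]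
  ring

theorem tendsto_neg_sq_sub_add_rpow_neg_half :
    Tendsto (fun t ↦ -((t - p) ^ 2 + ε) ^ (-(1 : ℝ) / 2)) atTop (𝓝 0) := by
  have hbase : Tendsto (fun t ↦ (t - p) ^ 2 + ε) atTop atTop :=
    tendsto_atTop_add_const_right _ _
      ((tendsto_pow_atTop two_ne_zero).comp (tendsto_atTop_add_const_right _ (-p) tendsto_id))
  simpa [neg_div] using ((tendsto_rpow_neg_atTop (by norm_num : (0 : ℝ) < 1 / 2)).comp hbase).neg

theorem continuous_sq_sub_add_rpow (hε : 0 < ε) (r : ℝ) :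
    Continuous fun t ↦ ((t - p) ^ 2 + ε) ^ r :=
  (by fun_prop : Continuous fun t ↦ (t - p) ^ 2 + ε).rpow_const fun _ ↦ Or.inl (by positivity)

theorem continuous_abs_sub_mul_sq_sub_add_rpow (hε : 0 < ε) (r : ℝ) :
    Continuous fun t ↦ |t - p| * ((t - p) ^ 2 + ε) ^ r :=
  (continuous_abs.comp (continuous_sub_right p)).mul (continuous_sq_sub_add_rpow p hε r)

theorem sub_mul_sq_sub_add_rpow_nonneg (hε : 0 < ε) {t : ℝ} (ht : t ∈ Ioi p) :
    0 ≤ (t - p) * ((t - p) ^ 2 + ε) ^ (-(3 : ℝ) / 2) := by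
  have : 0 ≤ t - p := sub_nonneg.mpr (mem_Ioi.mp ht).le
  positivity

theorem abs_sub_mul_sq_sub_add_rpow_eqOn_Ioi :
    EqOn (fun t ↦ |t - p| * ((t - p) ^ 2 + ε) ^ (-(3 : ℝ) / 2))
      (fun t ↦ (t - p) * ((t - p) ^ 2 + ε) ^ (-(3 : ℝ) / 2)) (Ioi p) := fun t ht ↦ by
  simp only [abs_of_pos (sub_pos.mpr (show p < t from ht))]

theorem integrableOn_Ioi_abs_sub_mul_sq_sub_add_rpow (hε : 0 < ε) :
    IntegrableOn (fun t ↦ |t - p| * ((t - p) ^ 2 + ε) ^ (-(3 : ℝ) / 2)) (Ioi p) :=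
  (integrableOn_Ioi_deriv_of_nonneg' (fun x _ ↦ hasDerivAt_neg_sq_sub_add_rpow_neg_half p hε x)
    (fun _ ↦ sub_mul_sq_sub_add_rpow_nonneg p hε) (tendsto_neg_sq_sub_add_rpow_neg_half p)
    ).congr_fun (abs_sub_mul_sq_sub_add_rpow_eqOn_Ioi p).symm measurableSet_Ioi

theorem integral_Ioi_abs_sub_mul_sq_sub_add_rpow (hε : 0 < ε) :
    ∫ t in Ioi p, |t - p| * ((t - p) ^ 2 + ε) ^ (-(3 : ℝ) / 2) = ε ^ (-(1 : ℝ) / 2) := by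
  rw [setIntegral_congr_fun measurableSet_Ioi (abs_sub_mul_sq_sub_add_rpow_eqOn_Ioi p),
    integral_Ioi_of_hasDerivAt_of_nonneg'
      (fun x _ ↦ hasDerivAt_neg_sq_sub_add_rpow_neg_half p hε x)
      (fun _ ↦ sub_mul_sq_sub_add_rpow_nonneg p hε) (tendsto_neg_sq_sub_add_rpow_neg_half p)]
  simp

theorem integral_Ioc_abs_sub_mul_sq_sub_add_rpow_le (hε : 0 < ε) {a : ℝ} (hap : a ≤ p) :
    ∫ t in Ioc a p, |t - p| * ((t - p) ^ 2 + ε) ^ (-(3 : ℝ) / 2) ≤ ε ^ (-(1 : ℝ) / 2) := by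
  have heq : EqOn (fun t ↦ |t - p| * ((t - p) ^ 2 + ε) ^ (-(3 : ℝ) / 2))
      (fun t ↦ -((t - p) * ((t - p) ^ 2 + ε) ^ (-(3 : ℝ) / 2))) (Ioc a p) := fun t ht ↦ by
    simp only [abs_of_nonpos (sub_nonpos.mpr ht.2), neg_mul]
  have hderiv : ∀ x ∈ uIcc a p, HasDerivAt (fun t ↦ ((t - p) ^ 2 + ε) ^ (-(1 : ℝ) / 2))
      (-((x - p) * ((x - p) ^ 2 + ε) ^ (-(3 : ℝ) / 2))) x := fun x _ ↦ by
    simpa [Pi.neg_def] using (hasDerivAt_neg_sq_sub_add_rpow_neg_half p hε x).neg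
  have hint : IntervalIntegrable (fun x ↦ -((x - p) * ((x - p) ^ 2 + ε) ^ (-(3 : ℝ) / 2)))
      volume a p :=
    ((continuous_sub_right p).mul (continuous_sq_sub_add_rpow p hε _)).neg.intervalIntegrable _ _
  rw [setIntegral_congr_fun measurableSet_Ioc heq, ← intervalIntegral.integral_of_le hap,
    intervalIntegral.integral_eq_sub_of_hasDerivAt hderiv hint, sub_self, zero_pow two_ne_zero, zero_add, sub_le_self_iff]
  positivity

theorem integrableOn_Ioi_abs_sub_mul_sq_sub_add_rpow_of_le (hε : 0 < ε) {a : ℝ} (hap : a ≤ p) :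
    IntegrableOn (fun t ↦ |t - p| * ((t - p) ^ 2 + ε) ^ (-(3 : ℝ) / 2)) (Ioi a) := by
  rw [← Ioc_union_Ioi_eq_Ioi hap]
  exact ((continuous_abs_sub_mul_sq_sub_add_rpow p hε _).integrableOn_Ioc).union
    (integrableOn_Ioi_abs_sub_mul_sq_sub_add_rpow p hε)

theorem integral_Ioi_abs_sub_mul_sq_sub_add_rpow_le_of_le (hε : 0 < ε) {a : ℝ} (hap : a ≤ p) :
    ∫ t in Ioi a, |t - p| * ((t - p) ^ 2 + ε) ^ (-(3 : ℝ) / 2) ≤ 2 * ε ^ (-(1 : ℝ) / 2) := by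
  rw [← Ioc_union_Ioi_eq_Ioi hap, setIntegral_union (Ioc_disjoint_Ioi le_rfl) measurableSet_Ioi
    (continuous_abs_sub_mul_sq_sub_add_rpow p hε _).integrableOn_Ioc
    (integrableOn_Ioi_abs_sub_mul_sq_sub_add_rpow p hε),
    integral_Ioi_abs_sub_mul_sq_sub_add_rpow p hε]
  linarith [integral_Ioc_abs_sub_mul_sq_sub_add_rpow_le p hε hap]

end

theorem norm_integrand_le {c : ℝ} (hc : c ∈ Ico (-1 : ℝ) 1) (ξ ξ' : ℝ) {t : ℝ} (ht : 0 < t) :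
    ‖((t : ℂ) ^ ((ξ : ℂ) * Complex.I + 3/2) - (t : ℂ) ^ ((ξ' : ℂ) * Complex.I + 3/2)) *
        (((t ^ 2 - 2 * c * t + 1) ^ (-(3 : ℝ)/2) : ℝ) : ℂ) / (t : ℂ)‖
      ≤ 16 * |ξ - ξ'| * (|t - 1| * ((t - 1) ^ 2 + (1 - c)) ^ (-(3 : ℝ) / 2)) := by
  have hε : 0 < 1 - c := sub_pos.mpr hc.2
  have hquad := sq_sub_one_add_le_four_mul ht.le (Ico_subset_Icc_self hc)
  have hD₀ : 0 ≤ (t ^ 2 - 2 * c * t + 1) ^ (-(3 : ℝ) / 2) :=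
    rpow_nonneg (by nlinarith [sq_nonneg (t - 1)]) _
  have hD : (t ^ 2 - 2 * c * t + 1) ^ (-(3 : ℝ) / 2)
      ≤ 8 * ((t - 1) ^ 2 + (1 - c)) ^ (-(3 : ℝ) / 2) :=
    rpow_neg_three_halves_le_of_le_four_mul (by positivity) hquad
  have hdiff := norm_ofReal_cpow_sub_cpow_le ht ξ ξ' (3 / 2)
  rw [show (3 / 2 : ℂ).re = 3 / 2 by norm_num, rpow_three_halves ht.le] at hdiff
  rw [norm_div, norm_mul, Complex.norm_real, Complex.norm_real, norm_of_nonneg hD₀,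
    norm_of_nonneg ht.le]
  calc _ ≤ |ξ - ξ'| * |log t| * (t * √t) * (t ^ 2 - 2 * c * t + 1) ^ (-(3 : ℝ) / 2) / t := by
        gcongr
    _ = |ξ - ξ'| * (√t * |log t|) * (t ^ 2 - 2 * c * t + 1) ^ (-(3 : ℝ) / 2) := by
        field_simp
    _ ≤ |ξ - ξ'| * (2 * |t - 1|) * (8 * ((t - 1) ^ 2 + (1 - c)) ^ (-(3 : ℝ) / 2)) := by
        gcongr ?_ * ?_
        exact mul_le_mul_of_nonneg_left (sqrt_mul_abs_log_le ht) (abs_nonneg _)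
    _ = 16 * |ξ - ξ'| * (|t - 1| * ((t - 1) ^ 2 + (1 - c)) ^ (-(3 : ℝ) / 2)) := by ring

/-- There is `C > 0` such that for every `c ∈ [-1, 1)` and all
`ξ, ξ' ∈ ℝ`,
`|∫₀^∞ (t^{iξ+3/2} - t^{iξ'+3/2}) (t² - 2ct + 1)^{-3/2} dt/t| ≤ C |ξ - ξ'| (1-c)^{-1/2}`. -/
theorem stmt_8 :
    ∃ C > (0 : ℝ), ∀ c ∈ Set.Ico (-1 : ℝ) 1, ∀ ξ ξ' : ℝ,
      ‖∫ t in Set.Ioi (0 : ℝ),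
          ((t : ℂ) ^ ((ξ : ℂ) * Complex.I + 3/2) - (t : ℂ) ^ ((ξ' : ℂ) * Complex.I + 3/2)) *
            (((t ^ 2 - 2 * c * t + 1) ^ (-(3 : ℝ)/2) : ℝ) : ℂ) / (t : ℂ)‖
        ≤ C * |ξ - ξ'| * (1 - c) ^ (-(1 : ℝ)/2) := by
  refine ⟨32, by norm_num, fun c hc ξ ξ' ↦ ?_⟩
  have hε : 0 < 1 - c := sub_pos.mpr hc.2
  calc _ ≤ ∫ t in Ioi (0 : ℝ),
          16 * |ξ - ξ'| * (|t - 1| * ((t - 1) ^ 2 + (1 - c)) ^ (-(3 : ℝ) / 2)) :=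
        norm_integral_le_of_norm_le
          ((integrableOn_Ioi_abs_sub_mul_sq_sub_add_rpow_of_le 1 hε zero_le_one).const_mul _)
          ((ae_restrict_iff' measurableSet_Ioi).mpr
            (Eventually.of_forall fun t ht ↦ norm_integrand_le hc ξ ξ' ht))
    _ = 16 * |ξ - ξ'| * ∫ t in Ioi (0 : ℝ), |t - 1| * ((t - 1) ^ 2 + (1 - c)) ^ (-(3 : ℝ) / 2) :=
        integral_const_mul _ _
    _ ≤ 16 * |ξ - ξ'| * (2 * (1 - c) ^ (-(1 : ℝ) / 2)) := by
        gcongr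
        exact integral_Ioi_abs_sub_mul_sq_sub_add_rpow_le_of_le 1 hε zero_le_one
    _ = 32 * |ξ - ξ'| * (1 - c) ^ (-(1 : ℝ) / 2) := by ring
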